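/- Prescription of the directions of extremal nonlocal curvatures: for any two disjoint, nonempty, closed subsets Σ₋, Σ₊ of S^{N−2}, there exists f ∈ C²(ℝ^{N−1}) with f(0) = 0 and ∇f(0) = 0 such that, with E the subgraph of f and K_{s,e} the associated nonlocal directional curvatures at 0, one has K_{s,e₋} < K_{s,e} < K_{s,e₊} for every e₋ ∈ Σ₋, every e ∈ S^{N−2}∖(Σ₋∪Σ₊) and every e₊ ∈ Σ₊; in particular the function e ↦ K_{s,e} attains its minimum over S^{N−2} exactly at the points of Σ₋ and its maximum exactly at the points of Σ₊. -/

import Mathlib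

open MeasureTheory Filter

/-- `χ̃_E = χ_E − χ_{∁E}` for the subgraph `E = {(x′,h) : h ≤ f(x′)}`. -/
noncomputable def chiT {n : ℕ} (f : EuclideanSpace ℝ (Fin n) → ℝ)
    (p : EuclideanSpace ℝ (Fin n) × ℝ) : ℝ :=
  if p.2 ≤ f p.1 then 1 else -1

/-- The truncated integral `∫₀^{+∞} dρ ∫_ℝ dh χ_{ρ²+h²≥ε²}·ρ^{N−2}·χ̃_E(ρe+h·e_N)/(ρ²+h²)^{(N+2s)/2}`
whose limit as `ε ↓ 0` defines the nonlocal directional curvature. -/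
noncomputable def dirInt (N : ℕ) (s : ℝ) (f : EuclideanSpace ℝ (Fin (N - 1)) → ℝ)
    (e : EuclideanSpace ℝ (Fin (N - 1))) (ε : ℝ) : ℝ :=
  ∫ ρ in Set.Ioi (0 : ℝ), ∫ h : ℝ,
    if ε ^ 2 ≤ ρ ^ 2 + h ^ 2 then
      ρ ^ (N - 2) * chiT f (ρ • e, h) / (ρ ^ 2 + h ^ 2) ^ (((N : ℝ) + 2 * s) / 2)
    else 0

/-- The nonlocal directional curvature of `∂E` at `0` in direction `e` equals `K`
(as a principal value). -/
def HasDirCurv (N : ℕ) (s : ℝ) (f : EuclideanSpace ℝ (Fin (N - 1)) → ℝ)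
    (e : EuclideanSpace ℝ (Fin (N - 1))) (K : ℝ) : Prop :=
  Tendsto (dirInt N s f e) (nhdsWithin 0 (Set.Ioi 0)) (nhds K)

/-- The truncated integral `∫_{ℝ^N∖B_ε} χ̃_E(x)/|x|^{N+2s} dx`, written in the coordinates
`x = (x′,h) ∈ ℝ^{N−1}×ℝ` (so `|x|² = ‖x′‖²+h²`). -/
noncomputable def meanInt (N : ℕ) (s : ℝ) (f : EuclideanSpace ℝ (Fin (N - 1)) → ℝ)
    (ε : ℝ) : ℝ :=
  ∫ p in {p : EuclideanSpace ℝ (Fin (N - 1)) × ℝ | ε ^ 2 ≤ ‖p.1‖ ^ 2 + p.2 ^ 2},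
    chiT f p / (‖p.1‖ ^ 2 + p.2 ^ 2) ^ (((N : ℝ) + 2 * s) / 2)

/-- `ω_{N−2} = H^{N−2}(S^{N−2})`, the Hausdorff measure of the unit sphere of `ℝ^{N−1}`. -/
noncomputable def omegaS (N : ℕ) : ℝ :=
  (μH[(N : ℝ) - 2] (Metric.sphere (0 : EuclideanSpace ℝ (Fin (N - 1))) 1)).toReal

/-- The nonlocal mean curvature of `∂E` at `0` equals `H` (as a principal value). -/
def HasMeanCurv (N : ℕ) (s : ℝ) (f : EuclideanSpace ℝ (Fin (N - 1)) → ℝ) (H : ℝ) : Prop :=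
  Tendsto (fun ε => (1 / omegaS N) * meanInt N s f ε) (nhdsWithin 0 (Set.Ioi 0)) (nhds H)

namespace PED
open Set


/-- generic: integral of an (a.e.-)odd function vanishes, no integrability needed -/
lemma odd_int (g : ℝ → ℝ) (hg : ∀ h : ℝ, h ≠ 0 → g (-h) = - g h) : ∫ h : ℝ, g h = 0 := by
  have h0 : ∀ᵐ h : ℝ, (h : ℝ) ≠ 0 := by
    rw [ae_iff]
    simp only [ne_eq, not_not, setOf_eq_eq_singleton]
    exact measure_singleton 0
  have h1 : ∫ h : ℝ, g (-h) = ∫ h : ℝ, g h := integral_neg_eq_self g _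
  have h2 : ∫ h : ℝ, g (-h) = ∫ h : ℝ, (- g h) := by
    refine integral_congr_ae ?_
    filter_upwards [h0] with h hh
    exact hg h hh
  rw [h2, integral_neg] at h1
  linarith

lemma chi_le {h t₁ t₂ : ℝ} (ht : t₁ ≤ t₂) :
    (if h ≤ t₁ then (1:ℝ) else -1) ≤ (if h ≤ t₂ then 1 else -1) := by
  by_cases h1 : h ≤ t₁
  · simp [h1, h1.trans ht]
  · by_cases h2 : h ≤ t₂ <;> simp [h1, h2]

lemma abs_chi (h t : ℝ) : |if h ≤ t then (1:ℝ) else -1| = 1 := by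
  by_cases h1 : h ≤ t <;> simp [h1]

lemma denom_pos {ρ h : ℝ} (hρ : 0 < ρ) : (0:ℝ) < (ρ^2 + h^2) ^ (α : ℝ) := by
  positivity

lemma denom_ge {ρ h α : ℝ} (hρ : 1 ≤ ρ) (hα : 1 ≤ α) :
    1 + h^2 ≤ (ρ^2 + h^2) ^ (α : ℝ) := by
  have h1 : (1:ℝ) ≤ ρ^2 + h^2 := by nlinarith
  calc 1 + h^2 ≤ ρ^2 + h^2 := by nlinarith
    _ = (ρ^2 + h^2) ^ (1:ℝ) := (Real.rpow_one _).symm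
    _ ≤ (ρ^2 + h^2) ^ (α:ℝ) := Real.rpow_le_rpow_of_exponent_le h1 hα

lemma integrable_chi (m : ℕ) {α : ℝ} (t : ℝ) {ρ : ℝ} (hρ : 1 ≤ ρ) (hα : 1 ≤ α) :
    Integrable (fun h : ℝ => ρ ^ m * (if h ≤ t then (1:ℝ) else -1) / (ρ^2 + h^2) ^ α) := by
  have hmeas : Measurable (fun h : ℝ => ρ ^ m * (if h ≤ t then (1:ℝ) else -1) / (ρ^2 + h^2) ^ α) := by
    apply Measurable.div
    · exact (Measurable.ite measurableSet_Iic measurable_const measurable_const).const_mul _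
    · exact ((continuous_const.add (continuous_pow 2)).rpow_const
        (fun x => Or.inr (by linarith))).measurable
  refine (integrable_inv_one_add_sq.const_mul (ρ ^ m)).mono' hmeas.aestronglyMeasurable ?_
  refine Eventually.of_forall fun h => ?_
  have hρ0 : (0:ℝ) < ρ := by linarith
  have hd : (0:ℝ) < (ρ^2 + h^2) ^ (α : ℝ) := by positivity
  rw [Real.norm_eq_abs, abs_div, abs_mul, abs_chi, mul_one, abs_of_nonneg (by positivity : (0:ℝ) ≤ ρ ^ m),
    abs_of_pos hd]
  rw [div_le_iff₀ hd]
  have h1 : (0:ℝ) < 1 + h^2 := by positivity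
  calc ρ ^ m = ρ ^ m * (1 + h^2)⁻¹ * (1 + h^2) := by field_simp
    _ ≤ ρ ^ m * (1 + h^2)⁻¹ * ((ρ^2 + h^2) ^ (α:ℝ)) := by
        have h2 : (0:ℝ) ≤ ρ ^ m * (1 + h^2)⁻¹ := by positivity
        exact mul_le_mul_of_nonneg_left (denom_ge (h := h) hρ hα) h2


lemma chi_norm_le (m : ℕ) {α : ℝ} (t : ℝ) {ρ : ℝ} (hρ : 1 ≤ ρ) (hα : 1 ≤ α) (h : ℝ) :
    ‖ρ ^ m * (if h ≤ t then (1:ℝ) else -1) / (ρ^2 + h^2) ^ α‖ ≤ ρ ^ m * (1 + h^2)⁻¹ := by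
  have hρ0 : (0:ℝ) < ρ := by linarith
  have hd : (0:ℝ) < (ρ^2 + h^2) ^ (α : ℝ) := by positivity
  rw [Real.norm_eq_abs, abs_div, abs_mul, abs_chi, mul_one,
    abs_of_nonneg (by positivity : (0:ℝ) ≤ ρ ^ m), abs_of_pos hd, div_le_iff₀ hd]
  have h1 : (0:ℝ) < 1 + h^2 := by positivity
  calc ρ ^ m = ρ ^ m * (1 + h^2)⁻¹ * (1 + h^2) := by field_simp
    _ ≤ ρ ^ m * (1 + h^2)⁻¹ * ((ρ^2 + h^2) ^ (α:ℝ)) := by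
        have h2 : (0:ℝ) ≤ ρ ^ m * (1 + h^2)⁻¹ := by positivity
        exact mul_le_mul_of_nonneg_left (denom_ge (h := h) hρ hα) h2

noncomputable def Jf (m : ℕ) (α t ρ : ℝ) : ℝ :=
  ∫ h : ℝ, ρ ^ m * (if h ≤ t then (1:ℝ) else -1) / (ρ^2 + h^2) ^ α

lemma Jf_zero (m : ℕ) (α ρ : ℝ) : Jf m α 0 ρ = 0 := by
  apply odd_int
  intro h hh
  have h2 : (-h)^2 = h^2 := by ring
  rw [h2]
  rcases lt_or_gt_of_ne hh with h1 | h1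
  · rw [if_neg (by linarith), if_pos h1.le]; ring
  · rw [if_pos (by linarith), if_neg (by simpa using h1)]; ring

lemma Jf_mono (m : ℕ) {α : ℝ} {t₁ t₂ ρ : ℝ} (hρ : 1 ≤ ρ) (hα : 1 ≤ α) (ht : t₁ ≤ t₂) :
    Jf m α t₁ ρ ≤ Jf m α t₂ ρ := by
  refine integral_mono (integrable_chi m t₁ hρ hα) (integrable_chi m t₂ hρ hα) fun h => ?_
  have hd : (0:ℝ) < (ρ^2 + h^2) ^ (α : ℝ) := by positivity
  have h0 : (0:ℝ) ≤ ρ ^ m := by positivity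
  have := mul_le_mul_of_nonneg_left (chi_le (h := h) ht) h0
  gcongr

lemma Jf_bound (m : ℕ) {α : ℝ} (t : ℝ) {ρ : ℝ} (hρ : 1 ≤ ρ) (hα : 1 ≤ α) :
    |Jf m α t ρ| ≤ ρ ^ m * Real.pi := by
  rw [← Real.norm_eq_abs]
  have hb : Integrable (fun h : ℝ => ρ ^ m * (1 + h^2)⁻¹) :=
    integrable_inv_one_add_sq.const_mul _
  calc ‖Jf m α t ρ‖ ≤ ∫ h : ℝ, ρ ^ m * (1 + h^2)⁻¹ :=
        norm_integral_le_of_norm_le hb (Eventually.of_forall (chi_norm_le m t hρ hα))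
    _ = ρ ^ m * Real.pi := by
        rw [MeasureTheory.integral_const_mul, integral_univ_inv_one_add_sq]

lemma Jf_strict (m : ℕ) {α : ℝ} {t₁ t₂ ρ : ℝ} (hρ : 1 ≤ ρ) (hα : 1 ≤ α) (ht : t₁ < t₂) :
    Jf m α t₁ ρ < Jf m α t₂ ρ := by
  have hρ0 : (0:ℝ) < ρ := by linarith
  have i1 := integrable_chi m (α := α) t₁ hρ hα
  have i2 := integrable_chi m (α := α) t₂ hρ hα
  have key : 0 < Jf m α t₂ ρ - Jf m α t₁ ρ := by
    rw [Jf, Jf, ← integral_sub i2 i1]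
    set D := fun h : ℝ => ρ ^ m * (if h ≤ t₂ then (1:ℝ) else -1) / (ρ^2 + h^2) ^ α -
      ρ ^ m * (if h ≤ t₁ then (1:ℝ) else -1) / (ρ^2 + h^2) ^ α with hD
    have hnn : ∀ h, 0 ≤ D h := by
      intro h
      have hd : (0:ℝ) < (ρ^2 + h^2) ^ (α : ℝ) := by positivity
      have h0 : (0:ℝ) ≤ ρ ^ m := by positivity
      have hle := mul_le_mul_of_nonneg_left (chi_le (h := h) ht.le) h0
      simp only [hD, sub_nonneg]
      gcongr
    have hsupp : Ioc t₁ t₂ ⊆ Function.support D := by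
      intro h hh
      have hd : (0:ℝ) < (ρ^2 + h^2) ^ (α : ℝ) := by positivity
      have h0 : (0:ℝ) < ρ ^ m := by positivity
      simp only [Function.mem_support, hD]
      rw [if_pos hh.2, if_neg (not_le.2 hh.1)]
      intro hcon
      have : ρ ^ m * 1 / (ρ^2 + h^2) ^ α - ρ ^ m * (-1) / (ρ^2 + h^2) ^ α
          = 2 * (ρ ^ m / (ρ^2 + h^2) ^ α) := by ring
      rw [this] at hcon
      have : (0:ℝ) < 2 * (ρ ^ m / (ρ^2 + h^2) ^ α) := by positivity
      linarith
    refine (integral_pos_iff_support_of_nonneg_ae (Eventually.of_forall hnn) (i2.sub i1)).2 ?_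
    calc (0:ENNReal) < volume (Ioc t₁ t₂) := by
          rw [Real.volume_Ioc]; simp [ht]
      _ ≤ volume (Function.support D) := measure_mono hsupp
  linarith


noncomputable def bmp : ContDiffBump (5/2 : ℝ) := ⟨1/2, 1, by norm_num, by norm_num⟩

lemma bmp_zero_left {r : ℝ} (hr : r ≤ 3/2) : bmp r = 0 :=
  bmp.zero_of_le_dist (by rw [Real.dist_eq, abs_of_nonpos (by norm_num [bmp] at *; linarith)]; norm_num [bmp]; linarith)

lemma bmp_zero_right {r : ℝ} (hr : 7/2 ≤ r) : bmp r = 0 :=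
  bmp.zero_of_le_dist (by rw [Real.dist_eq, abs_of_nonneg (by norm_num [bmp] at *; linarith)]; norm_num [bmp]; linarith)

lemma bmp_pos {r : ℝ} (h1 : 3/2 < r) (h2 : r < 7/2) : 0 < bmp r :=
  bmp.pos_of_mem_ball (by rw [Metric.mem_ball, Real.dist_eq, abs_lt]; constructor <;> norm_num [bmp] <;> linarith)

noncomputable def gOut (m : ℕ) (α c ρ : ℝ) : ℝ :=
  if 3/2 < ρ then Jf m α (c * bmp ρ) ρ else 0

lemma gOut_eq_zero_left (m : ℕ) (α c : ℝ) {ρ : ℝ} (h : ρ ≤ 3/2) : gOut m α c ρ = 0 :=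
  if_neg (not_lt.2 h)

lemma gOut_eq_zero_right (m : ℕ) (α c : ℝ) {ρ : ℝ} (h : 7/2 ≤ ρ) : gOut m α c ρ = 0 := by
  have h1 : (3:ℝ)/2 < ρ := by linarith
  rw [gOut, if_pos h1, bmp_zero_right h, mul_zero, Jf_zero]

lemma gOut_sm (m : ℕ) {α : ℝ} (hα : 0 ≤ α) (c : ℝ) : StronglyMeasurable (gOut m α c) := by
  have heq : gOut m α c = fun ρ => ∫ h : ℝ,
      (fun p : ℝ × ℝ => if 3/2 < p.1 then
        p.1 ^ m * (if p.2 ≤ c * bmp p.1 then (1:ℝ) else -1) / (p.1^2 + p.2^2) ^ α else 0) (ρ, h) := by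
    funext ρ
    by_cases hρ : (3:ℝ)/2 < ρ
    · simp only [gOut, if_pos hρ, Jf]
    · simp only [gOut, if_neg hρ, integral_zero]
  have hmeas : Measurable (fun p : ℝ × ℝ => if 3/2 < p.1 then
      p.1 ^ m * (if p.2 ≤ c * bmp p.1 then (1:ℝ) else -1) / (p.1^2 + p.2^2) ^ α else 0) := by
    apply Measurable.ite
    · exact measurableSet_lt measurable_const measurable_fst
    · apply Measurable.div
      · apply Measurable.mul
        · exact measurable_fst.pow_const m
        · refine Measurable.ite ?_ measurable_const measurable_const
          exact measurableSet_le measurable_snd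
            (continuous_const.mul (bmp.continuous.comp continuous_fst)).measurable
      · exact (((continuous_fst.pow 2).add (continuous_snd.pow 2)).rpow_const
          (fun _ => Or.inr hα)).measurable
    · exact measurable_const
  rw [heq]
  exact hmeas.stronglyMeasurable.integral_prod_right'

lemma gOut_integrable (m : ℕ) {α : ℝ} (hα : 1 ≤ α) (c : ℝ) : Integrable (gOut m α c) := by
  have hb : Integrable ((Ioc (3/2:ℝ) (7/2)).indicator (fun _ => (7/2:ℝ)^m * Real.pi)) := by
    refine (integrableOn_const ?_).integrable_indicator measurableSet_Ioc
    rw [Real.volume_Ioc]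
    exact ENNReal.ofReal_ne_top
  refine hb.mono' (gOut_sm m (by linarith) c).aestronglyMeasurable
    (Eventually.of_forall fun ρ => ?_)
  have hind : ∀ x : ℝ, 0 ≤ (Ioc (3/2:ℝ) (7/2)).indicator (fun _ => (7/2:ℝ)^m * Real.pi) x :=
    fun x => Set.indicator_nonneg (fun _ _ => by positivity) x
  by_cases h1 : (3:ℝ)/2 < ρ
  · by_cases h2 : ρ ≤ 7/2
    · rw [Set.indicator_of_mem (Set.mem_Ioc.mpr ⟨h1, h2⟩)]
      rw [gOut, if_pos h1, Real.norm_eq_abs]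
      calc |Jf m α (c * bmp ρ) ρ| ≤ ρ ^ m * Real.pi :=
            Jf_bound m _ (by linarith) hα
        _ ≤ (7/2:ℝ)^m * Real.pi := by
            have := pow_le_pow_left₀ (by linarith : (0:ℝ) ≤ ρ) h2 m
            nlinarith [Real.pi_pos]
    · rw [gOut_eq_zero_right m α c (by linarith), norm_zero]
      exact hind ρ
  · rw [gOut_eq_zero_left m α c (not_lt.1 h1), norm_zero]
    exact hind ρ

lemma gOut_mono (m : ℕ) {α : ℝ} (hα : 1 ≤ α) {c₁ c₂ : ℝ} (hc : c₁ ≤ c₂) (ρ : ℝ) :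
    gOut m α c₁ ρ ≤ gOut m α c₂ ρ := by
  by_cases h1 : (3:ℝ)/2 < ρ
  · simp only [gOut, if_pos h1]
    exact Jf_mono m (by linarith) hα (mul_le_mul_of_nonneg_right hc (bmp.nonneg' ρ))
  · simp [gOut, if_neg h1]

noncomputable def KOut (m : ℕ) (α c : ℝ) : ℝ := ∫ ρ in Ioi (0:ℝ), gOut m α c ρ

lemma KOut_mono (m : ℕ) {α : ℝ} (hα : 1 ≤ α) {c₁ c₂ : ℝ} (hc : c₁ ≤ c₂) :
    KOut m α c₁ ≤ KOut m α c₂ :=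
  integral_mono ((gOut_integrable m hα c₁).restrict) ((gOut_integrable m hα c₂).restrict)
    (gOut_mono m hα hc)

lemma KOut_strict (m : ℕ) {α c₁ c₂ : ℝ} (hα : 1 ≤ α) (hc : c₁ < c₂) :
    KOut m α c₁ < KOut m α c₂ := by
  have i1 := (gOut_integrable m hα c₁).restrict (s := Ioi 0)
  have i2 := (gOut_integrable m hα c₂).restrict (s := Ioi 0)
  have key : 0 < ∫ ρ in Ioi (0:ℝ), (gOut m α c₂ ρ - gOut m α c₁ ρ) := by
    refine (integral_pos_iff_support_of_nonneg_ae
      (Eventually.of_forall fun ρ => sub_nonneg.2 (gOut_mono m hα hc.le ρ)) (i2.sub i1)).2 ?_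
    rw [Measure.restrict_apply' measurableSet_Ioi]
    have hsub : Ioo (3/2:ℝ) (7/2) ⊆
        Function.support (fun ρ => gOut m α c₂ ρ - gOut m α c₁ ρ) ∩ Ioi 0 := by
      intro ρ hρ
      have hρ1 : (3:ℝ)/2 < ρ := hρ.1
      have hρ2 : ρ < 7/2 := hρ.2
      refine ⟨?_, lt_trans (by norm_num) hρ1⟩
      simp only [Function.mem_support, gOut, if_pos hρ1]
      have := Jf_strict m (by linarith : (1:ℝ) ≤ ρ) hα
        (mul_lt_mul_of_pos_right hc (bmp_pos hρ1 hρ2))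
      exact sub_ne_zero_of_ne this.ne'
    calc (0:ENNReal) < volume (Ioo (3/2:ℝ) (7/2)) := by rw [Real.volume_Ioo]; norm_num
      _ ≤ _ := measure_mono hsub
  rw [integral_sub i2 i1] at key
  rw [KOut, KOut]
  linarith


lemma inner_zero (ε A α ρ : ℝ) :
    ∫ h : ℝ, (if ε^2 ≤ ρ^2 + h^2 then A * (if h ≤ (0:ℝ) then (1:ℝ) else -1) / (ρ^2+h^2)^α else 0)
      = 0 := by
  apply odd_int
  intro h hh
  have h2 : (-h)^2 = h^2 := by ring
  rw [h2]
  by_cases hc : ε^2 ≤ ρ^2 + h^2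
  · rw [if_pos hc, if_pos hc]
    rcases lt_or_gt_of_ne hh with h1 | h1
    · rw [if_neg (by linarith), if_pos h1.le]; ring
    · rw [if_pos (by linarith), if_neg (by simpa using h1)]; ring
  · rw [if_neg hc, if_neg hc]; ring


lemma smooth_f {E : Type*} [NormedAddCommGroup E] [InnerProductSpace ℝ E]
    [FiniteDimensional ℝ E]
    (um up : E → ℝ) (hum : ContDiff ℝ (↑(⊤:ℕ∞)) um) (hup : ContDiff ℝ (↑(⊤:ℕ∞)) up)
    (hd : ∀ y : E, ‖y‖ = 1 → 0 < um y + up y) :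
    ContDiff ℝ 2 (fun x : E => um (‖x‖⁻¹ • x) / (um (‖x‖⁻¹ • x) + up (‖x‖⁻¹ • x)) * bmp ‖x‖) := by
  rw [contDiff_iff_contDiffAt]
  intro x
  rcases lt_or_ge ‖x‖ (3/2) with hx | hx
  · have hz : ∀ y ∈ Metric.ball (0:E) (3/2),
        um (‖y‖⁻¹ • y) / (um (‖y‖⁻¹ • y) + up (‖y‖⁻¹ • y)) * bmp ‖y‖ = 0 := by
      intro y hy
      have h1 : ‖y‖ < 3/2 := mem_ball_zero_iff.mp hy
      rw [bmp_zero_left h1.le, mul_zero]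
    exact contDiffAt_const.congr_of_eventuallyEq
      (eventually_of_mem (Metric.isOpen_ball.mem_nhds (mem_ball_zero_iff.2 hx)) hz)
  · have hx0 : x ≠ 0 := by intro h; rw [h, norm_zero] at hx; norm_num at hx
    have hnx : ‖x‖ ≠ 0 := norm_ne_zero_iff.2 hx0
    have hn : ContDiffAt ℝ 2 (fun y : E => ‖y‖) x := contDiffAt_norm ℝ hx0
    have hg : ContDiffAt ℝ 2 (fun y : E => ‖y‖⁻¹ • y) x := (hn.inv hnx).smul contDiffAt_id
    have hgx : ‖(‖x‖⁻¹ • x)‖ = 1 := by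
      rw [norm_smul, norm_inv, norm_norm, inv_mul_cancel₀ hnx]
    have hum2 : ContDiffAt ℝ 2 um (‖x‖⁻¹ • x) := (hum.of_le (by norm_cast)).contDiffAt
    have hup2 : ContDiffAt ℝ 2 up (‖x‖⁻¹ • x) := (hup.of_le (by norm_cast)).contDiffAt
    have hdx : um (‖x‖⁻¹ • x) + up (‖x‖⁻¹ • x) ≠ 0 := (hd _ hgx).ne'
    have hb : ContDiffAt ℝ 2 (fun y : E => (bmp ‖y‖ : ℝ)) x :=
      (bmp.contDiff (n := 2)).contDiffAt.comp x hn
    have hA : ContDiffAt ℝ 2 (fun y : E => um (‖y‖⁻¹ • y)) x := by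
      exact ContDiffAt.comp (g := um) (f := fun y : E => ‖y‖⁻¹ • y) x hum2 hg
    have hB : ContDiffAt ℝ 2 (fun y : E => up (‖y‖⁻¹ • y)) x := by
      exact ContDiffAt.comp (g := up) (f := fun y : E => ‖y‖⁻¹ • y) x hup2 hg
    exact ((hA.div (hA.add hB) hdx).mul hb)

end PED

/-- **Prescription of the directions of extremal nonlocal curvatures**: for any two disjoint,
nonempty, closed subsets `Σ₋, Σ₊` of `S^{N−2}`, there exists `f ∈ C²(ℝ^{N−1})` with
`f(0) = 0` and `∇f(0) = 0` such that the associated nonlocal directional curvatures satisfy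
`K_{s,e₋} < K_{s,e} < K_{s,e₊}` for every `e₋ ∈ Σ₋`, every non-extremal unit `e` and every
`e₊ ∈ Σ₊`; in particular the minimum is attained exactly on `Σ₋` and the maximum exactly
on `Σ₊`. -/
theorem prescribed_extremal_directions (N : ℕ) (hN : 3 ≤ N) (s : ℝ)
    (hs : s ∈ Set.Ioo (0 : ℝ) (1 / 2))
    (Sm Sp : Set (EuclideanSpace ℝ (Fin (N - 1))))
    (hSm : Sm ⊆ Metric.sphere (0 : EuclideanSpace ℝ (Fin (N - 1))) 1)
    (hSp : Sp ⊆ Metric.sphere (0 : EuclideanSpace ℝ (Fin (N - 1))) 1)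
    (hcm : IsClosed Sm) (hcp : IsClosed Sp)
    (hnem : Sm.Nonempty) (hnep : Sp.Nonempty)
    (hdisj : Disjoint Sm Sp) :
    ∃ f : EuclideanSpace ℝ (Fin (N - 1)) → ℝ,
      ContDiff ℝ 2 f ∧ f 0 = 0 ∧ fderiv ℝ f 0 = 0 ∧
      ∃ K : EuclideanSpace ℝ (Fin (N - 1)) → ℝ,
        (∀ e, ‖e‖ = 1 → HasDirCurv N s f e (K e)) ∧
        (∀ em ∈ Sm, ∀ ep ∈ Sp, ∀ e, ‖e‖ = 1 → e ∉ Sm → e ∉ Sp →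
          K em < K e ∧ K e < K ep) ∧
        (∀ em ∈ Sm, ∀ e, ‖e‖ = 1 → K em ≤ K e) ∧
        (∀ ep ∈ Sp, ∀ e, ‖e‖ = 1 → K e ≤ K ep) := by
  classical
  obtain ⟨um, hum_supp, hum_sm, hum_rg⟩ := IsOpen.exists_contDiff_support_eq (n := ⊤) hcm.isOpen_compl
  obtain ⟨up, hup_supp, hup_sm, hup_rg⟩ := IsOpen.exists_contDiff_support_eq (n := ⊤) hcp.isOpen_compl
  have hum0 : ∀ y, 0 ≤ um y := fun y => (hum_rg (Set.mem_range_self y)).1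
  have hup0 : ∀ y, 0 ≤ up y := fun y => (hup_rg (Set.mem_range_self y)).1
  have hmem_m : ∀ y, um y = 0 → y ∈ Sm := by
    intro y hy
    by_contra hyn
    have h1 : y ∈ Function.support um := by rw [hum_supp]; exact hyn
    exact h1 hy
  have hmem_p : ∀ y, up y = 0 → y ∈ Sp := by
    intro y hy
    by_contra hyn
    have h1 : y ∈ Function.support up := by rw [hup_supp]; exact hyn
    exact h1 hy
  have hdenom : ∀ y, ‖y‖ = 1 → 0 < um y + up y := by
    intro y hy
    rcases (hum0 y).lt_or_eq with h | h
    · linarith [hup0 y]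
    · rcases (hup0 y).lt_or_eq with h2 | h2
      · linarith
      · exact absurd (hmem_p y h2.symm) (Set.disjoint_left.mp hdisj (hmem_m y h.symm))
  set φ : EuclideanSpace ℝ (Fin (N-1)) → ℝ := fun y => um y / (um y + up y) with hφdef
  set f : EuclideanSpace ℝ (Fin (N-1)) → ℝ :=
    fun x => um (‖x‖⁻¹ • x) / (um (‖x‖⁻¹ • x) + up (‖x‖⁻¹ • x)) * PED.bmp ‖x‖ with hfdef
  have hsmooth : ContDiff ℝ 2 f := PED.smooth_f um up hum_sm hup_sm hdenom
  have hf00 : f 0 = 0 := by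
    simp only [hfdef]
    rw [norm_zero, PED.bmp_zero_left (by norm_num), mul_zero]
  have hf0ev : f =ᶠ[nhds (0 : EuclideanSpace ℝ (Fin (N-1)))] (fun _ => 0) := by
    refine eventually_of_mem (Metric.isOpen_ball.mem_nhds
      (Metric.mem_ball_self (by norm_num : (0:ℝ) < 3/2))) ?_
    intro y hy
    have h1 : ‖y‖ < 3/2 := mem_ball_zero_iff.mp hy
    simp only [hfdef]
    rw [PED.bmp_zero_left h1.le, mul_zero]
  have hfderiv : fderiv ℝ f 0 = 0 := by
    rw [hf0ev.fderiv_eq]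
    exact fderiv_const_apply 0
  have hf_ray : ∀ ρ : ℝ, 0 < ρ → ∀ e : EuclideanSpace ℝ (Fin (N-1)), ‖e‖ = 1 →
      f (ρ • e) = φ e * PED.bmp ρ := by
    intro ρ hρ e he
    have hn : ‖ρ • e‖ = ρ := by rw [norm_smul, he, mul_one, Real.norm_eq_abs, abs_of_pos hρ]
    have hsm : ‖ρ • e‖⁻¹ • (ρ • e) = e := by
      rw [hn, smul_smul, inv_mul_cancel₀ hρ.ne', one_smul]
    simp only [hfdef, hφdef]
    rw [hsm, hn]
  have hα1 : 1 ≤ ((N:ℝ) + 2 * s) / 2 := by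
    have hN3 : (3:ℝ) ≤ (N:ℝ) := by exact_mod_cast hN
    have := hs.1
    linarith
  -- the bridge: for small ε the truncated integral is constant
  have hbridge : ∀ e : EuclideanSpace ℝ (Fin (N-1)), ‖e‖ = 1 → ∀ ε : ℝ, 0 < ε → ε ≤ 1 →
      dirInt N s f e ε = PED.KOut (N-2) (((N:ℝ) + 2 * s) / 2) (φ e) := by
    intro e he ε hε0 hε1
    rw [dirInt, PED.KOut]
    refine MeasureTheory.setIntegral_congr_fun measurableSet_Ioi fun ρ hρ => ?_
    have hρ0 : (0:ℝ) < ρ := Set.mem_Ioi.mp hρ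
    have hfv : f (ρ • e) = φ e * PED.bmp ρ := hf_ray ρ hρ0 e he
    simp only [chiT, hfv]
    by_cases h1 : (3:ℝ)/2 < ρ
    · rw [PED.gOut, if_pos h1, PED.Jf]
      refine integral_congr_ae (Filter.Eventually.of_forall fun h => ?_)
      refine if_pos ?_
      have hε2 : ε^2 ≤ 1 := by nlinarith
      have hρ2 : 1 ≤ ρ^2 := by nlinarith
      nlinarith [sq_nonneg h]
    · rw [PED.gOut_eq_zero_left _ _ _ (not_lt.1 h1)]
      rw [PED.bmp_zero_left (not_lt.1 h1), mul_zero]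
      exact PED.inner_zero ε (ρ ^ (N-2)) (((N:ℝ) + 2 * s) / 2) ρ
  -- φ values
  have hφge0 : ∀ y, 0 ≤ φ y := fun y => div_nonneg (hum0 y) (add_nonneg (hum0 y) (hup0 y))
  have hφ0 : ∀ y ∈ Sm, φ y = 0 := by
    intro y hy
    have h1 : y ∉ Function.support um := by rw [hum_supp]; simpa using hy
    have h2 : um y = 0 := Function.notMem_support.mp h1
    simp [hφdef, h2]
  have hφ1 : ∀ y ∈ Sp, φ y = 1 := by
    intro y hy
    have h1 : y ∉ Function.support up := by rw [hup_supp]; simpa using hy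
    have h2 : up y = 0 := Function.notMem_support.mp h1
    have h3 : um y ≠ 0 := by
      rw [← Function.mem_support, hum_supp]
      exact Set.disjoint_right.mp hdisj hy
    simp only [hφdef, h2, add_zero]
    exact div_self h3
  have hφpos : ∀ y, ‖y‖ = 1 → y ∉ Sm → 0 < φ y := by
    intro y hy hyn
    have h1 : um y ≠ 0 := by rw [← Function.mem_support, hum_supp]; exact hyn
    exact div_pos ((hum0 y).lt_of_ne (Ne.symm h1)) (hdenom y hy)
  have hφlt1 : ∀ y, ‖y‖ = 1 → y ∉ Sp → φ y < 1 := by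
    intro y hy hyn
    have h1 : up y ≠ 0 := by rw [← Function.mem_support, hup_supp]; exact hyn
    have h2 : 0 < up y := (hup0 y).lt_of_ne (Ne.symm h1)
    exact (div_lt_one (hdenom y hy)).2 (lt_add_of_pos_right _ h2)
  have hφle1 : ∀ y, ‖y‖ = 1 → φ y ≤ 1 := fun y hy =>
    (div_le_one (hdenom y hy)).2 (le_add_of_nonneg_right (hup0 y))
  refine ⟨f, hsmooth, hf00, hfderiv,
    fun e => PED.KOut (N-2) (((N:ℝ) + 2 * s) / 2) (φ e), ?_, ?_, ?_, ?_⟩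
  · intro e he
    show Filter.Tendsto (dirInt N s f e) (nhdsWithin 0 (Set.Ioi 0)) _
    refine Filter.Tendsto.congr' ?_ tendsto_const_nhds
    filter_upwards [Ioo_mem_nhdsGT_of_mem (by norm_num : (0:ℝ) ∈ Set.Ico (0:ℝ) 1)] with ε hε
    exact (hbridge e he ε hε.1 hε.2.le).symm
  · intro em hem ep hep e he hem' hep'
    have hem1 : ‖em‖ = 1 := mem_sphere_zero_iff_norm.mp (hSm hem)
    have hep1 : ‖ep‖ = 1 := mem_sphere_zero_iff_norm.mp (hSp hep)
    constructor
    · refine PED.KOut_strict _ hα1 ?_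
      rw [hφ0 em hem]
      exact hφpos e he hem'
    · refine PED.KOut_strict _ hα1 ?_
      rw [hφ1 ep hep]
      exact hφlt1 e he hep'
  · intro em hem e he
    refine PED.KOut_mono _ hα1 ?_
    rw [hφ0 em hem]
    exact hφge0 e
  · intro ep hep e he
    refine PED.KOut_mono _ hα1 ?_
    rw [hφ1 ep hep]
    exact hφle1 e he
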